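/- arXiv:1610.05093 — 2 statements merged into one kernel-verified Lean document; each statement's English description precedes it below -/
import Mathlib

section
/- Let G be a finite simple graph with vertex set [n] = {1,...,n}. Then the total number of increasing spanning forests of G is at most the number of acyclic orientations of G, with equality if and only if the natural ordering 1,2,...,n is a perfect elimination ordering of G. -/
open Classical

/-- A simple graph on a linearly ordered vertex type is an *increasing forest*. -/
def IsIncreasingForest {V : Type*} [LinearOrder V] (F : SimpleGraph V) : Prop :=
  F.IsAcyclic ∧ ∀ (r v : V), (∀ w, F.Reachable r w → r ≤ w) →
    ∀ p : F.Walk r v, p.IsPath → p.support.Chain' (· < ·)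

/-- `F` is an increasing spanning forest of `G`. -/
def IsISF {n : ℕ} (G : SimpleGraph (Fin n)) (F : Finset (Sym2 (Fin n))) : Prop :=
  (F : Set (Sym2 (Fin n))) ⊆ G.edgeSet ∧
    IsIncreasingForest (SimpleGraph.fromEdgeSet (F : Set (Sym2 (Fin n))))

/-- The total number of increasing spanning forests of `G`. -/
noncomputable def isfTotal {n : ℕ} (G : SimpleGraph (Fin n)) : ℕ :=
  ((Finset.univ : Finset (Finset (Sym2 (Fin n)))).filter (fun F => IsISF G F)).card

/-- `r` is an acyclic orientation of `G`: each edge of `G` receives exactly one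
direction, no non-edge is directed, and there is no directed cycle. -/
def IsAcyclicOrientation {n : ℕ} (G : SimpleGraph (Fin n)) (r : Fin n → Fin n → Bool) : Prop :=
  (∀ u v, r u v = true → G.Adj u v) ∧
  (∀ u v, G.Adj u v → (r u v = true ↔ ¬ r v u = true)) ∧
  (∀ v, ¬ Relation.TransGen (fun a b => r a b = true) v v)

/-- The number of acyclic orientations of `G`. -/
noncomputable def ao {n : ℕ} (G : SimpleGraph (Fin n)) : ℕ :=
  ((Finset.univ : Finset (Fin n → Fin n → Bool)).filter
    (fun r => IsAcyclicOrientation G r)).card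

/-- The natural ordering `1, 2, …, n` is a perfect elimination ordering of `G`. -/
def IsPEO {n : ℕ} (G : SimpleGraph (Fin n)) : Prop :=
  ∀ i j k : Fin n, i < j → j < k → G.Adj i k → G.Adj j k → G.Adj i j

/-!
A spanning forest is increasing exactly when every vertex has at most one smaller neighbour in it:
the largest vertex of a cycle has two, and an increasing path from the root enters a vertex
through its unique smaller neighbour. Hence the increasing spanning forests number
`∏ i, (#{j < i | j ~ i} + 1)`.

An acyclic orientation of `G` is an acyclic orientation of `G - n` together with the set `S` of
neighbours of `n` whose edge points to `n`; the admissible `S` are the down-closed subsets of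
`N(n)` for the reachability order. A finite poset has at least `|N(n)| + 1` down-sets (the empty
one and the principal ones), with equality iff it is a chain, and `N(n)` is a chain for every
acyclic orientation iff it is a clique (otherwise two non-adjacent neighbours can both be made
sinks). So `ao G ≥ (|N(n)| + 1) · ao (G - n)`, with equality iff `N(n)` is a clique, and induction
on `n` gives the inequality, with equality iff every `{j < k | j ~ k}` is a clique, i.e. iff
`1, …, n` is a perfect elimination ordering.
-/

section IncreasingForest

variable {V : Type*} [LinearOrder V] {H : SimpleGraph V}

lemma le_of_mem_support_of_isChain {a b : V} (p : H.Walk a b) (hp : p.support.IsChain (· < ·))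
    {w : V} (hw : w ∈ p.support) : w ≤ b := by
  induction p generalizing w with
  | nil => simp_all
  | @cons a c b hac q ih =>
    rw [SimpleGraph.Walk.support_cons, ← q.cons_tail_support, List.isChain_cons_cons,
      q.cons_tail_support] at hp
    rcases List.mem_cons.mp hw with rfl | hw
    · exact hp.1.le.trans (ih hp.2 q.start_mem_support)
    · exact ih hp.2 hw

lemma isAcyclic_of_subsingleton_lower (h : ∀ i, {j | j < i ∧ H.Adj j i}.Subsingleton) :
    H.IsAcyclic := by
  intro u c hc
  obtain ⟨v, hv, hmax⟩ := c.support.toFinset.exists_max_image id ⟨u, by simp⟩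
  rw [List.mem_toFinset] at hv
  set d := c.rotate v hv
  have hd : d.IsCycle := hc.rotate hv
  have hlower : ∀ w, H.Adj w v → w ∈ d.support → w ∈ {j | j < v ∧ H.Adj j v} := fun w hw hmem =>
    ⟨(hmax w (List.mem_toFinset.mpr ((c.mem_support_rotate_iff v hv).mp hmem))).lt_of_ne hw.ne, hw⟩
  exact hd.snd_ne_penultimate <| h v
    (hlower _ (d.adj_snd hd.not_nil).symm (d.getVert_mem_support 1))
    (hlower _ (d.adj_penultimate hd.not_nil) (d.getVert_mem_support _))

lemma isChain_support_of_subsingleton_lower (h : ∀ i, {j | j < i ∧ H.Adj j i}.Subsingleton) :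
    ∀ {a b : V} (p : H.Walk a b), p.IsPath → (∀ u, H.Adj u a → u < a → u ∉ p.support) →
      p.support.IsChain (· < ·) := by
  intro a b p
  induction p with
  | nil => exact fun _ _ => List.isChain_singleton _
  | @cons a c b hac q ih =>
    intro hp hmin
    have hlt : a < c :=
      (lt_or_gt_of_ne hac.ne).resolve_right fun hca => hmin c hac.symm hca (by simp)
    rw [SimpleGraph.Walk.support_cons, ← q.cons_tail_support, List.isChain_cons_cons,
      q.cons_tail_support]
    refine ⟨hlt, ih hp.of_cons fun u hu hu_lt hmem => ?_⟩
    obtain rfl : u = a := h c ⟨hu_lt, hu⟩ ⟨hlt, hac⟩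
    exact ((SimpleGraph.Walk.cons_isPath_iff hac q).mp hp).2 hmem

lemma subsingleton_lower_of_isIncreasingForest [Finite V] (hF : IsIncreasingForest H) (i : V) :
    {j | j < i ∧ H.Adj j i}.Subsingleton := by
  obtain ⟨r, hir, hr⟩ := Set.exists_min_image {w | H.Reachable i w} id (Set.toFinite _)
    ⟨i, SimpleGraph.Reachable.refl i⟩
  have hroot : ∀ w, H.Reachable r w → r ≤ w := fun w hw => hr w (hir.trans hw)
  have hpenultimate : ∀ x ∈ {j | j < i ∧ H.Adj j i}, ∃ p : H.Path r i, p.1.penultimate = x := by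
    rintro x ⟨hxi, hx⟩
    obtain ⟨w⟩ := (hir.symm.trans hx.symm.reachable : H.Reachable r x)
    have hi : i ∉ w.toPath.1.support := fun hmem =>
      (le_of_mem_support_of_isChain _ (hF.2 r x hroot _ w.toPath.2) hmem).not_gt hxi
    exact ⟨⟨_, w.toPath.2.concat hi hx⟩, by simp⟩
  rintro x hx y hy
  obtain ⟨p, rfl⟩ := hpenultimate x hx
  obtain ⟨q, rfl⟩ := hpenultimate y hy
  rw [(hF.1.subsingleton_path r i).elim p q]

theorem isIncreasingForest_iff [Finite V] :
    IsIncreasingForest H ↔ ∀ i, {j | j < i ∧ H.Adj j i}.Subsingleton :=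
  ⟨subsingleton_lower_of_isIncreasingForest, fun h =>
    ⟨isAcyclic_of_subsingleton_lower h, fun _ _ hr p hp =>
      isChain_support_of_subsingleton_lower h p hp fun u hu hlt _ =>
        (hr u hu.symm.reachable).not_gt hlt⟩⟩

end IncreasingForest

section Counting

variable {n : ℕ} (G : SimpleGraph (Fin n))

noncomputable def lowerNbrs (i : Fin n) : Finset (Fin n) :=
  Finset.univ.filter fun j => j < i ∧ G.Adj j i

lemma isISF_iff {F : Finset (Sym2 (Fin n))} :
    IsISF G F ↔ (F : Set (Sym2 (Fin n))) ⊆ G.edgeSet ∧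
      ∀ i, {j | j < i ∧ s(j, i) ∈ F}.Subsingleton := by
  rw [IsISF, isIncreasingForest_iff]
  simp only [SimpleGraph.fromEdgeSet_adj, Finset.mem_coe]
  refine and_congr_right fun _ => forall_congr' fun i => ?_
  rw [show {j | j < i ∧ s(j, i) ∈ F ∧ j ≠ i} = {j | j < i ∧ s(j, i) ∈ F} from
    Set.ext fun j => ⟨fun h => ⟨h.1, h.2.1⟩, fun h => ⟨h.1, h.2, h.1.ne⟩⟩]

lemma exists_mem_lowerNbrs_of_mem_edgeSet {e : Sym2 (Fin n)} (he : e ∈ G.edgeSet) :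
    ∃ i, ∃ j : lowerNbrs G i, e = s(↑j, i) := by
  induction e using Sym2.ind with
  | _ a b =>
    rw [SimpleGraph.mem_edgeSet] at he
    rcases lt_or_gt_of_ne (G.ne_of_adj he) with hab | hba
    · exact ⟨b, ⟨a, by simp [lowerNbrs, hab, he]⟩, rfl⟩
    · exact ⟨a, ⟨b, by simp [lowerNbrs, hba, he.symm]⟩, Sym2.eq_swap⟩

noncomputable def forestOfChoice (f : ∀ i, Option (lowerNbrs G i)) : Finset (Sym2 (Fin n)) :=
  Finset.univ.filter fun e => ∃ i j, f i = some j ∧ e = s(↑j, i)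

variable {G}

lemma mem_forestOfChoice {f : ∀ i, Option (lowerNbrs G i)} {e : Sym2 (Fin n)} :
    e ∈ forestOfChoice G f ↔ ∃ i j, f i = some j ∧ e = s(↑j, i) := by
  simp [forestOfChoice]

lemma mk_mem_forestOfChoice_iff {f : ∀ i, Option (lowerNbrs G i)} {a i : Fin n} (ha : a < i) :
    s(a, i) ∈ forestOfChoice G f ↔ ∃ j, f i = some j ∧ ↑j = a := by
  rw [mem_forestOfChoice]
  constructor
  · rintro ⟨i', j, hj, he⟩
    rcases Sym2.eq_iff.mp he with ⟨rfl, rfl⟩ | ⟨rfl, rfl⟩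
    · exact ⟨j, hj, rfl⟩
    · exact absurd ((Finset.mem_filter.mp j.2).2.1.trans ha) (lt_irrefl _)
  · rintro ⟨j, hj, rfl⟩
    exact ⟨i, j, hj, rfl⟩

lemma mk_mem_forestOfChoice {f : ∀ i, Option (lowerNbrs G i)} {i : Fin n} (j : lowerNbrs G i) :
    s(↑j, i) ∈ forestOfChoice G f ↔ f i = some j := by
  rw [mk_mem_forestOfChoice_iff (Finset.mem_filter.mp j.2).2.1]
  exact ⟨fun ⟨j', hj', h⟩ => Subtype.ext h ▸ hj', fun h => ⟨j, h, rfl⟩⟩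

lemma forestOfChoice_injective : Function.Injective (forestOfChoice G) := by
  intro f g hfg
  funext i
  refine Option.ext fun j => ?_
  rw [← mk_mem_forestOfChoice, ← mk_mem_forestOfChoice, hfg]

lemma isISF_forestOfChoice (f : ∀ i, Option (lowerNbrs G i)) : IsISF G (forestOfChoice G f) := by
  refine (isISF_iff G).mpr ⟨fun e he => ?_, fun i a ha b hb => ?_⟩
  · obtain ⟨i, j, -, rfl⟩ := mem_forestOfChoice.mp he
    exact (Finset.mem_filter.mp j.2).2.2
  · obtain ⟨j, hj, rfl⟩ := (mk_mem_forestOfChoice_iff ha.1).mp ha.2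
    obtain ⟨k, hk, rfl⟩ := (mk_mem_forestOfChoice_iff hb.1).mp hb.2
    rw [Option.some_injective _ (hj.symm.trans hk)]

lemma exists_forestOfChoice_eq {F : Finset (Sym2 (Fin n))} (hF : IsISF G F) :
    ∃ f, forestOfChoice G f = F := by
  obtain ⟨hFG, hlower⟩ := (isISF_iff G).mp hF
  let f : ∀ i, Option (lowerNbrs G i) := fun i =>
    if h : ∃ j : lowerNbrs G i, s(↑j, i) ∈ F then some h.choose else none
  have hf : ∀ i (j : lowerNbrs G i), f i = some j ↔ s(↑j, i) ∈ F := by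
    intro i j
    have hj : ↑j < i := (Finset.mem_filter.mp j.2).2.1
    by_cases h : ∃ j : lowerNbrs G i, s(↑j, i) ∈ F
    · have hc : ↑h.choose < i := (Finset.mem_filter.mp h.choose.2).2.1
      simp only [f, dif_pos h, Option.some_inj]
      exact ⟨fun e => e ▸ h.choose_spec, fun hjF =>
        Subtype.ext (hlower i ⟨hc, h.choose_spec⟩ ⟨hj, hjF⟩)⟩
    · simp only [f, dif_neg h, reduceCtorEq, false_iff]
      exact fun hjF => h ⟨j, hjF⟩
  refine ⟨f, Finset.ext fun e => ?_⟩
  constructor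
  · intro he
    obtain ⟨i, j, hj, rfl⟩ := mem_forestOfChoice.mp he
    exact (hf i j).mp hj
  · intro he
    obtain ⟨i, j, rfl⟩ := exists_mem_lowerNbrs_of_mem_edgeSet G (hFG he)
    exact (mk_mem_forestOfChoice j).mpr ((hf i j).mpr he)

theorem isfTotal_eq_prod : isfTotal G = ∏ i, ((lowerNbrs G i).card + 1) := by
  have hISF : Finset.univ.filter (IsISF G) = Finset.univ.image (forestOfChoice G) := by
    ext F
    simp only [Finset.mem_filter, Finset.mem_univ, true_and, Finset.mem_image]
    exact ⟨exists_forestOfChoice_eq, fun ⟨f, hf⟩ => hf ▸ isISF_forestOfChoice f⟩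
  rw [isfTotal, hISF, Finset.card_image_of_injective _ forestOfChoice_injective,
    Finset.card_univ, Fintype.card_pi]
  simp

end Counting

section DownClosed

variable {α : Type*} (R : α → α → Prop) (N : Finset α)

noncomputable def downClosedSubsets : Finset (Finset α) :=
  N.powerset.filter fun S => ∀ y ∈ N, ∀ x ∈ S, R y x → y ∈ S

noncomputable def principalDownSets : Finset (Finset α) :=
  insert ∅ (N.image fun u => N.filter (R · u))

variable {R N}

lemma mem_downClosedSubsets {S : Finset α} :
    S ∈ downClosedSubsets R N ↔ S ⊆ N ∧ ∀ y ∈ N, ∀ x ∈ S, R y x → y ∈ S := by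
  simp [downClosedSubsets]

lemma principalDownSets_subset [IsTrans α R] : principalDownSets R N ⊆ downClosedSubsets R N := by
  intro S hS
  rcases Finset.mem_insert.mp hS with rfl | hS
  · simp [mem_downClosedSubsets]
  · obtain ⟨u, -, rfl⟩ := Finset.mem_image.mp hS
    refine mem_downClosedSubsets.mpr ⟨Finset.filter_subset _ _, fun y hy x hx hyx => ?_⟩
    exact Finset.mem_filter.mpr ⟨hy, _root_.trans hyx (Finset.mem_filter.mp hx).2⟩

lemma card_principalDownSets [Std.Refl R] [Std.Antisymm R] :
    (principalDownSets R N).card = N.card + 1 := by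
  have hmem : ∀ u ∈ N, u ∈ N.filter (R · u) := fun u hu => Finset.mem_filter.mpr ⟨hu, refl u⟩
  rw [principalDownSets, Finset.card_insert_of_notMem, Finset.card_image_of_injOn]
  · intro u hu v hv huv
    have huv' : N.filter (R · u) = N.filter (R · v) := huv
    have huv : u ∈ N.filter (R · v) := huv' ▸ hmem u hu
    have hvu : v ∈ N.filter (R · u) := huv'.symm ▸ hmem v hv
    exact antisymm (Finset.mem_filter.mp huv).2 (Finset.mem_filter.mp hvu).2
  · simp only [Finset.mem_image, not_exists, not_and]
    exact fun u hu h => Finset.notMem_empty u (h ▸ hmem u hu)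

lemma downClosedSubsets_subset_principalDownSets [Std.Refl R] [IsTrans α R]
    (hN : IsChain R (N : Set α)) : downClosedSubsets R N ⊆ principalDownSets R N := by
  intro S hS
  obtain ⟨hSN, hclosed⟩ := mem_downClosedSubsets.mp hS
  rcases S.eq_empty_or_nonempty with rfl | ⟨x₀, hx₀⟩
  · exact Finset.mem_insert_self _ _
  have : Nonempty (S : Set α) := ⟨⟨x₀, hx₀⟩⟩
  obtain ⟨⟨z, hz⟩, hmax⟩ := (directedOn_iff_directed.mp
    ((hN.mono (Finset.coe_subset.mpr hSN)).directedOn)).finset_le Finset.univ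
  refine Finset.mem_insert_of_mem (Finset.mem_image.mpr ⟨z, hSN hz, Finset.ext fun x => ?_⟩)
  rw [Finset.mem_filter]
  exact ⟨fun ⟨hx, hxz⟩ => hclosed x hx z hz hxz,
    fun hx => ⟨hSN hx, hmax ⟨x, hx⟩ (Finset.mem_univ _)⟩⟩

lemma exists_mem_downClosedSubsets_notMem_principalDownSets [Std.Refl R] [IsTrans α R]
    [Std.Antisymm R] (hN : ¬ IsChain R (N : Set α)) :
    ∃ S ∈ downClosedSubsets R N, S ∉ principalDownSets R N := by
  obtain ⟨j, hj, k, hk, -, hjk⟩ : ∃ j ∈ N, ∃ k ∈ N, j ≠ k ∧ ¬ (R j k ∨ R k j) := by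
    simpa [IsChain, Set.Pairwise] using hN
  have hmem : ∀ {x}, x ∈ N.filter (R · j) ∪ N.filter (R · k) ↔ x ∈ N ∧ (R x j ∨ R x k) := by
    simp [and_or_left]
  refine ⟨N.filter (R · j) ∪ N.filter (R · k), mem_downClosedSubsets.mpr ⟨?_, ?_⟩, ?_⟩
  · exact Finset.union_subset (Finset.filter_subset _ _) (Finset.filter_subset _ _)
  · intro y hy x hx hyx
    obtain ⟨-, hxj | hxk⟩ := hmem.mp hx
    · exact hmem.mpr ⟨hy, Or.inl (_root_.trans hyx hxj)⟩
    · exact hmem.mpr ⟨hy, Or.inr (_root_.trans hyx hxk)⟩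
  · intro hU
    rcases Finset.mem_insert.mp hU with hU | hU
    · exact Finset.notMem_empty j (hU ▸ hmem.mpr ⟨hj, Or.inl (refl j)⟩)
    obtain ⟨u, hu, hU⟩ := Finset.mem_image.mp hU
    have hprincipal : ∀ x ∈ N, R x u ↔ R x j ∨ R x k := fun x hx => by
      have hU : N.filter (R · u) = N.filter (R · j) ∪ N.filter (R · k) := hU
      simpa [hx] using (Finset.ext_iff.mp hU x).trans hmem
    have hju := (hprincipal j hj).mpr (Or.inl (refl j))
    have hku := (hprincipal k hk).mpr (Or.inr (refl k))
    rcases (hprincipal u hu).mp (refl u) with huj | huk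
    · exact hjk (Or.inr (antisymm huj hju ▸ hku))
    · exact hjk (Or.inl (antisymm huk hku ▸ hju))

theorem card_le_card_downClosedSubsets [Std.Refl R] [IsTrans α R] [Std.Antisymm R] :
    N.card + 1 ≤ (downClosedSubsets R N).card :=
  card_principalDownSets (R := R) ▸ Finset.card_le_card principalDownSets_subset

theorem card_downClosedSubsets_eq_iff_isChain [Std.Refl R] [IsTrans α R] [Std.Antisymm R] :
    (downClosedSubsets R N).card = N.card + 1 ↔ IsChain R (N : Set α) := by
  refine ⟨fun h => by_contra fun hN => ?_, fun hN => ?_⟩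
  · obtain ⟨S, hS, hSP⟩ := exists_mem_downClosedSubsets_notMem_principalDownSets hN
    have := Finset.card_le_card (Finset.insert_subset hS principalDownSets_subset)
    rw [Finset.card_insert_of_notMem hSP, card_principalDownSets] at this
    omega
  · exact le_antisymm (card_principalDownSets (R := R) ▸
      Finset.card_le_card (downClosedSubsets_subset_principalDownSets hN))
      card_le_card_downClosedSubsets

end DownClosed

section Rank

variable {α β : Type*} {R : α → α → Prop}

lemma lt_of_transGen_of_rank [Preorder β] {f : α → β} (hf : ∀ a b, R a b → f a < f b) {a b : α}
    (h : Relation.TransGen R a b) : f a < f b := by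
  induction h with
  | single h => exact hf _ _ h
  | tail _ h ih => exact ih.trans (hf _ _ h)

lemma exists_rank_of_acyclic [Fintype α] (h : ∀ a, ¬ Relation.TransGen R a a) :
    ∃ f : α → ℕ, ∀ a b, R a b → f a < f b := by
  refine ⟨fun a => (Finset.univ.filter (Relation.TransGen R · a)).card, fun a b hab => ?_⟩
  refine Finset.card_lt_card (Finset.ssubset_def.mpr ⟨fun y hy => ?_, fun hsub => ?_⟩)
  · simp only [Finset.mem_filter, Finset.mem_univ, true_and] at hy ⊢
    exact hy.tail hab
  · have := hsub (Finset.mem_filter.mpr ⟨Finset.mem_univ _, .single hab⟩)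
    exact h a (Finset.mem_filter.mp this).2

end Rank

section Orientation

variable {n : ℕ} (G : SimpleGraph (Fin n))

abbrev reach (r : Fin n → Fin n → Bool) : Fin n → Fin n → Prop :=
  Relation.ReflTransGen fun a b => r a b = true

variable {G} in
lemma IsAcyclicOrientation.antisymm_reach {r : Fin n → Fin n → Bool}
    (hr : IsAcyclicOrientation G r) : Std.Antisymm (reach r) := by
  refine ⟨fun a b hab hba => ?_⟩
  rcases Relation.reflTransGen_iff_eq_or_transGen.mp hab with h | h
  · exact h.symm
  · exact (hr.2.2 a (h.trans_left hba)).elim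

noncomputable def orientByKey {β : Type*} [LinearOrder β] (κ : Fin n → β) :
    Fin n → Fin n → Bool :=
  fun u v => decide (G.Adj u v ∧ κ u < κ v)

lemma isAcyclicOrientation_orientByKey {β : Type*} [LinearOrder β] {κ : Fin n → β}
    (hκ : Function.Injective κ) : IsAcyclicOrientation G (orientByKey G κ) := by
  have hlt : ∀ u v, orientByKey G κ u v = true → κ u < κ v := fun u v h => by
    simp only [orientByKey, decide_eq_true_eq] at h
    exact h.2
  refine ⟨fun u v h => ?_, fun u v huv => ?_, fun v h => lt_irrefl _ (lt_of_transGen_of_rank hlt h)⟩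
  · simp only [orientByKey, decide_eq_true_eq] at h
    exact h.1
  · simp only [orientByKey, decide_eq_true_eq, huv, huv.symm, true_and, not_lt]
    exact ⟨le_of_lt, fun h => h.lt_of_ne (hκ.ne huv.ne)⟩

lemma exists_isAcyclicOrientation_sinks {x y : Fin n} (hxy : ¬ G.Adj x y) :
    ∃ r, IsAcyclicOrientation G r ∧ ∀ z, r x z = false ∧ r y z = false := by
  let κ : Fin n → Bool ×ₗ Fin n := fun z => toLex (decide (z = x ∨ z = y), z)
  have hκ : Function.Injective κ := fun a b h => congrArg Prod.snd (toLex.injective h)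
  refine ⟨orientByKey G κ, isAcyclicOrientation_orientByKey G hκ, fun z => ?_⟩
  have hκ_lt : ∀ u, (u = x ∨ u = y) → κ u < κ z → z = x ∨ z = y := fun u hu h => by
    rcases Prod.Lex.toLex_lt_toLex.mp h with h | ⟨h, -⟩
    · simp only [hu, decide_true] at h
      exact ((Bool.le_true _).not_gt h).elim
    · simpa [hu] using h.symm
  simp only [orientByKey, decide_eq_false_iff_not, not_and]
  refine ⟨fun h hlt => ?_, fun h hlt => ?_⟩ <;>
    rcases hκ_lt _ (by simp) hlt with rfl | rfl <;> simp_all [G.adj_comm]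

theorem isClique_iff_forall_isChain_reach {N : Set (Fin n)} :
    G.IsClique N ↔ ∀ r, IsAcyclicOrientation G r → IsChain (reach r) N := by
  refine ⟨fun hN r hr x hx y hy hxy => ?_, fun h x hx y hy hxy => by_contra fun hadj => ?_⟩
  · by_cases hrxy : r x y = true
    · exact Or.inl (.single hrxy)
    · exact Or.inr (.single (by simpa [hrxy] using (hr.2.1 x y (hN hx hy hxy)).not))
  · obtain ⟨r, hr, hsink⟩ := exists_isAcyclicOrientation_sinks G hadj
    have hstuck : ∀ {u w}, (∀ z, r u z = false) → reach r u w → w = u := fun hu huw => by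
      rcases huw.cases_head with h | ⟨c, hc, -⟩
      · exact h.symm
      · simp [hu c] at hc
    rcases h r hr hx hy hxy with h | h
    · exact hxy (hstuck (fun z => (hsink z).1) h).symm
    · exact hxy (hstuck (fun z => (hsink z).2) h)

end Orientation

section Extension

variable {m : ℕ} (G : SimpleGraph (Fin (m + 1)))

noncomputable def lastNbrs : Finset (Fin m) :=
  Finset.univ.filter fun a => G.Adj a.castSucc (Fin.last m)

def restrictOrientation (r : Fin (m + 1) → Fin (m + 1) → Bool) : Fin m → Fin m → Bool :=
  fun a b => r a.castSucc b.castSucc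

noncomputable def inNbrsOfLast (r : Fin (m + 1) → Fin (m + 1) → Bool) : Finset (Fin m) :=
  Finset.univ.filter fun a => r a.castSucc (Fin.last m)

noncomputable def extendOrientation (r' : Fin m → Fin m → Bool) (S : Finset (Fin m)) :
    Fin (m + 1) → Fin (m + 1) → Bool :=
  Fin.lastCases (Fin.lastCases false fun b => decide (b ∈ lastNbrs G ∧ b ∉ S))
    fun a => Fin.lastCases (decide (a ∈ S)) fun b => r' a b

variable {G}

lemma restrictOrientation_extendOrientation (r' : Fin m → Fin m → Bool) (S : Finset (Fin m)) :
    restrictOrientation (extendOrientation G r' S) = r' := by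
  funext a b
  simp [restrictOrientation, extendOrientation]

lemma inNbrsOfLast_extendOrientation (r' : Fin m → Fin m → Bool) (S : Finset (Fin m)) :
    inNbrsOfLast (extendOrientation G r' S) = S := by
  ext a
  simp [inNbrsOfLast, extendOrientation]

lemma extendOrientation_restrictOrientation {r : Fin (m + 1) → Fin (m + 1) → Bool}
    (hr : IsAcyclicOrientation G r) :
    extendOrientation G (restrictOrientation r) (inNbrsOfLast r) = r := by
  funext u v
  have hnonadj : ∀ {u v}, ¬ G.Adj u v → r u v = false := fun huv =>
    Bool.eq_false_iff.mpr fun h => huv (hr.1 _ _ h)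
  induction u using Fin.lastCases with
  | cast a =>
    induction v using Fin.lastCases <;> simp [extendOrientation, restrictOrientation, inNbrsOfLast]
  | last =>
    induction v using Fin.lastCases with
    | last => simpa [extendOrientation] using (hnonadj (G.irrefl (v := Fin.last m))).symm
    | cast b =>
      by_cases hadj : G.Adj b.castSucc (Fin.last m)
      · have := hr.2.1 _ _ hadj.symm
        revert this
        simp only [extendOrientation, lastNbrs, inNbrsOfLast, Fin.lastCases_last,
          Fin.lastCases_castSucc, Finset.mem_filter, Finset.mem_univ, true_and, hadj]
        cases r (Fin.last m) b.castSucc <;> cases r b.castSucc (Fin.last m) <;> simp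
      · simpa [extendOrientation, lastNbrs, hadj] using (hnonadj fun h => hadj h.symm).symm

lemma isAcyclicOrientation_restrictOrientation {r : Fin (m + 1) → Fin (m + 1) → Bool}
    (hr : IsAcyclicOrientation G r) :
    IsAcyclicOrientation (G.comap Fin.castSucc) (restrictOrientation r) :=
  ⟨fun _ _ h => hr.1 _ _ h, fun _ _ h => hr.2.1 _ _ h,
    fun v h => hr.2.2 v.castSucc (h.lift Fin.castSucc fun _ _ h => h)⟩

lemma inNbrsOfLast_mem_downClosedSubsets {r : Fin (m + 1) → Fin (m + 1) → Bool}
    (hr : IsAcyclicOrientation G r) :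
    inNbrsOfLast r ∈ downClosedSubsets (reach (restrictOrientation r)) (lastNbrs G) := by
  refine mem_downClosedSubsets.mpr ⟨fun a ha => ?_, fun y hy x hx hyx => by_contra fun hyS => ?_⟩
  · simp only [inNbrsOfLast, lastNbrs, Finset.mem_filter, Finset.mem_univ, true_and] at ha ⊢
    exact hr.1 _ _ ha
  · simp only [inNbrsOfLast, lastNbrs, Finset.mem_filter, Finset.mem_univ, true_and] at hx hy hyS
    have hlast : r (Fin.last m) y.castSucc = true := (hr.2.1 _ _ hy.symm).mpr hyS
    exact hr.2.2 _ (.head' hlast ((hyx.lift Fin.castSucc fun _ _ h => h).tail hx))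

lemma extendOrientation_acyclic {r' : Fin m → Fin m → Bool} {S : Finset (Fin m)}
    (hr' : ∀ v, ¬ Relation.TransGen (fun a b => r' a b = true) v v)
    (hS : S ∈ downClosedSubsets (reach r') (lastNbrs G)) (v : Fin (m + 1)) :
    ¬ Relation.TransGen (fun a b => extendOrientation G r' S a b = true) v v := by
  obtain ⟨-, hclosed⟩ := mem_downClosedSubsets.mp hS
  obtain ⟨ρ, hρ⟩ := exists_rank_of_acyclic hr'
  -- a topological order: the vertices below `S`, then the last vertex, then the rest
  let level : Fin m → ℕ := fun a => if ∃ s ∈ S, reach r' a s then 0 else 2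
  let key : Fin (m + 1) → ℕ ×ₗ ℕ := Fin.lastCases (toLex (1, 0)) fun a => toLex (level a, ρ a)
  refine fun h => lt_irrefl _ (lt_of_transGen_of_rank (f := key) (fun u w huw => ?_) h)
  induction u using Fin.lastCases with
  | last =>
    induction w using Fin.lastCases with
    | last => simp [extendOrientation] at huw
    | cast b =>
      simp only [extendOrientation, Fin.lastCases_last, Fin.lastCases_castSucc,
        decide_eq_true_eq] at huw
      have : ¬ ∃ s ∈ S, reach r' b s := fun ⟨s, hs, hbs⟩ => huw.2 (hclosed b huw.1 s hs hbs)
      simp [key, level, this, Prod.Lex.toLex_lt_toLex]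
  | cast a =>
    induction w using Fin.lastCases with
    | last =>
      simp only [extendOrientation, Fin.lastCases_last, Fin.lastCases_castSucc,
        decide_eq_true_eq] at huw
      have : ∃ s ∈ S, reach r' a s := ⟨a, huw, .refl⟩
      simp [key, level, this, Prod.Lex.toLex_lt_toLex]
    | cast b =>
      simp only [extendOrientation, Fin.lastCases_castSucc] at huw
      have hlevel : level a ≤ level b := by
        by_cases hb : ∃ s ∈ S, reach r' b s
        · obtain ⟨s, hs, hbs⟩ := hb
          simp [level, show ∃ s ∈ S, reach r' a s from ⟨s, hs, .head huw hbs⟩]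
        · simp only [level, if_neg hb]
          split_ifs <;> omega
      simpa [key, Prod.Lex.toLex_lt_toLex', hlevel] using fun _ => hρ a b huw

lemma isAcyclicOrientation_extendOrientation {r' : Fin m → Fin m → Bool} {S : Finset (Fin m)}
    (hr' : IsAcyclicOrientation (G.comap Fin.castSucc) r')
    (hS : S ∈ downClosedSubsets (reach r') (lastNbrs G)) :
    IsAcyclicOrientation G (extendOrientation G r' S) := by
  have hSN := (mem_downClosedSubsets.mp hS).1
  refine ⟨fun u v huv => ?_, fun u v huv => ?_, extendOrientation_acyclic hr'.2.2 hS⟩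
  · induction u using Fin.lastCases <;> induction v using Fin.lastCases <;>
      simp only [extendOrientation, Fin.lastCases_last, Fin.lastCases_castSucc, lastNbrs,
        Finset.mem_filter, Finset.mem_univ, true_and, decide_eq_true_eq] at huv
    · simp at huv
    · exact huv.1.symm
    · simpa [lastNbrs] using hSN huv
    · exact hr'.1 _ _ huv
  · induction u using Fin.lastCases <;> induction v using Fin.lastCases <;>
      simp [extendOrientation, lastNbrs, huv, huv.symm]
    · exact (G.irrefl huv).elim
    · simpa using hr'.2.1 _ _ huv

end Extension

section Recursion

variable {m : ℕ} (G : SimpleGraph (Fin (m + 1)))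

lemma card_filter_restrictOrientation_eq {r' : Fin m → Fin m → Bool}
    (hr' : IsAcyclicOrientation (G.comap Fin.castSucc) r') :
    ((Finset.univ.filter (IsAcyclicOrientation G)).filter (restrictOrientation · = r')).card =
      (downClosedSubsets (reach r') (lastNbrs G)).card := by
  refine Finset.card_nbij' inNbrsOfLast (extendOrientation G r') ?_ ?_ ?_ ?_
  · intro r hr
    obtain ⟨hAO, rfl⟩ : IsAcyclicOrientation G r ∧ restrictOrientation r = r' := by simpa using hr
    exact inNbrsOfLast_mem_downClosedSubsets hAO
  · intro S hS
    simpa [restrictOrientation_extendOrientation] using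
      isAcyclicOrientation_extendOrientation hr' hS
  · intro r hr
    obtain ⟨hAO, rfl⟩ : IsAcyclicOrientation G r ∧ restrictOrientation r = r' := by simpa using hr
    exact extendOrientation_restrictOrientation hAO
  · intro S _
    exact inNbrsOfLast_extendOrientation r' S

theorem ao_eq_sum_card_downClosedSubsets :
    ao G = ∑ r' ∈ Finset.univ.filter (IsAcyclicOrientation (G.comap Fin.castSucc)),
      (downClosedSubsets (reach r') (lastNbrs G)).card := by
  rw [ao, Finset.card_eq_sum_card_fiberwise (f := restrictOrientation) fun r hr => ?_]
  · exact Finset.sum_congr rfl fun r' hr' =>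
      card_filter_restrictOrientation_eq G (Finset.mem_filter.mp hr').2
  · simpa using isAcyclicOrientation_restrictOrientation (Finset.mem_filter.mp hr).2

lemma ao_comap_castSucc_mul_eq_sum :
    ao (G.comap Fin.castSucc) * ((lastNbrs G).card + 1) =
      ∑ _r' ∈ Finset.univ.filter (IsAcyclicOrientation (G.comap Fin.castSucc)),
        ((lastNbrs G).card + 1) := by
  rw [Finset.sum_const, smul_eq_mul, ao]

theorem ao_comap_castSucc_mul_le :
    ao (G.comap Fin.castSucc) * ((lastNbrs G).card + 1) ≤ ao G := by
  rw [ao_comap_castSucc_mul_eq_sum, ao_eq_sum_card_downClosedSubsets]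
  refine Finset.sum_le_sum fun r' hr' => ?_
  have := (Finset.mem_filter.mp hr').2.antisymm_reach
  exact card_le_card_downClosedSubsets

theorem ao_eq_ao_comap_castSucc_mul_iff :
    ao G = ao (G.comap Fin.castSucc) * ((lastNbrs G).card + 1) ↔
      (G.comap Fin.castSucc).IsClique (lastNbrs G : Set (Fin m)) := by
  rw [ao_comap_castSucc_mul_eq_sum, ao_eq_sum_card_downClosedSubsets, eq_comm,
    Finset.sum_eq_sum_iff_of_le, isClique_iff_forall_isChain_reach]
  · simp only [Finset.mem_filter, Finset.mem_univ, true_and]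
    refine forall₂_congr fun r' hr' => ?_
    have := hr'.antisymm_reach
    rw [eq_comm, card_downClosedSubsets_eq_iff_isChain]
  · intro r' hr'
    have := (Finset.mem_filter.mp hr').2.antisymm_reach
    exact card_le_card_downClosedSubsets

lemma lowerNbrs_castSucc (i : Fin m) :
    lowerNbrs G i.castSucc = (lowerNbrs (G.comap Fin.castSucc) i).map Fin.castSuccEmb := by
  ext j
  induction j using Fin.lastCases <;> simp [lowerNbrs, (Fin.castSucc_lt_last i).not_gt]

lemma lowerNbrs_last : lowerNbrs G (Fin.last m) = (lastNbrs G).map Fin.castSuccEmb := by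
  ext j
  induction j using Fin.lastCases <;> simp [lowerNbrs, lastNbrs]

lemma prod_card_lowerNbrs_succ :
    ∏ i, ((lowerNbrs G i).card + 1) =
      (∏ i, ((lowerNbrs (G.comap Fin.castSucc) i).card + 1)) * ((lastNbrs G).card + 1) := by
  simp [Fin.prod_univ_castSucc, lowerNbrs_castSucc, lowerNbrs_last]

theorem isPEO_iff_isPEO_comap_castSucc_and_isClique :
    IsPEO G ↔ IsPEO (G.comap Fin.castSucc) ∧
      (G.comap Fin.castSucc).IsClique (lastNbrs G : Set (Fin m)) := by
  simp only [IsPEO, SimpleGraph.IsClique, Set.Pairwise, lastNbrs, Finset.coe_filter,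
    Finset.mem_univ, true_and, Set.mem_ofPred_eq, SimpleGraph.comap_adj]
  refine ⟨fun h => ⟨fun i j k hij hjk => h _ _ _ (Fin.castSucc_lt_castSucc_iff.mpr hij)
    (Fin.castSucc_lt_castSucc_iff.mpr hjk), fun a ha b hb hab => ?_⟩, fun ⟨h, hclique⟩ => ?_⟩
  · rcases lt_or_gt_of_ne hab with hab | hba
    · exact h _ _ _ (Fin.castSucc_lt_castSucc_iff.mpr hab) (Fin.castSucc_lt_last b) ha hb
    · exact (h _ _ _ (Fin.castSucc_lt_castSucc_iff.mpr hba) (Fin.castSucc_lt_last a) hb ha).symm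
  intro i j k hij hjk hik hjk'
  obtain ⟨j, rfl⟩ := Fin.exists_castSucc_eq.mpr (hjk.trans_le (Fin.le_last k)).ne
  obtain ⟨i, rfl⟩ := Fin.exists_castSucc_eq.mpr (hij.trans hjk |>.trans_le (Fin.le_last k)).ne
  induction k using Fin.lastCases with
  | last => exact hclique hik hjk' (Fin.castSucc_lt_castSucc_iff.mp hij).ne
  | cast k =>
    exact h i j k (Fin.castSucc_lt_castSucc_iff.mp hij) (Fin.castSucc_lt_castSucc_iff.mp hjk)
      hik hjk'

end Recursion

lemma ao_fin_zero (G : SimpleGraph (Fin 0)) : ao G = 1 := by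
  simp [ao, IsAcyclicOrientation]

theorem prod_card_lowerNbrs_le_ao_and_eq_iff_isPEO :
    ∀ {n : ℕ} (G : SimpleGraph (Fin n)), ∏ i, ((lowerNbrs G i).card + 1) ≤ ao G ∧
      (∏ i, ((lowerNbrs G i).card + 1) = ao G ↔ IsPEO G)
  | 0, G => by simp [ao_fin_zero, IsPEO]
  | m + 1, G => by
    obtain ⟨hle, heq⟩ := prod_card_lowerNbrs_le_ao_and_eq_iff_isPEO (G.comap Fin.castSucc)
    have hao := ao_comap_castSucc_mul_le G
    have hprod := Nat.mul_le_mul_right ((lastNbrs G).card + 1) hle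
    rw [prod_card_lowerNbrs_succ, isPEO_iff_isPEO_comap_castSucc_and_isClique, ← heq,
      ← ao_eq_ao_comap_castSucc_mul_iff]
    refine ⟨hprod.trans hao, fun h => ?_, fun ⟨h₁, h₂⟩ => by rw [h₁, h₂]⟩
    have h₂ := le_antisymm (h ▸ hprod) hao
    exact ⟨Nat.eq_of_mul_eq_mul_right (Nat.succ_pos _) (h.trans h₂), h₂⟩

theorem stmt_6 {n : ℕ} (G : SimpleGraph (Fin n)) :
    isfTotal G ≤ ao G ∧ (isfTotal G = ao G ↔ IsPEO G) := by
  rw [isfTotal_eq_prod]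
  exact prod_card_lowerNbrs_le_ao_and_eq_iff_isPEO G
end

section
/- Every subgraph of a tight labeled forest is a tight labeled forest. That is, if F is a finite forest whose vertices are distinct positive integers and F is tight, and F' is any subgraph of F (which is automatically a forest), then F' is tight. -/
/-- A list of elements of a linear order is *tight* if it contains no three-term
subsequence order-isomorphic to 231, 312 or 321. -/
def TightList {α : Type*} [LinearOrder α] (l : List α) : Prop :=
  ∀ a b c : α, [a, b, c].Sublist l →
    ¬(c < a ∧ a < b) ∧ ¬(b < c ∧ c < a) ∧ ¬(c < b ∧ b < a)

/-- A simple graph on a linearly ordered vertex type is a *tight forest* if it is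
acyclic and, rooting each connected component at its minimum vertex, the label
sequence of every path starting at a root is tight. -/
def IsTightForest {V : Type*} [LinearOrder V] (F : SimpleGraph V) : Prop :=
  F.IsAcyclic ∧ ∀ (r v : V), (∀ w, F.Reachable r w → r ≤ w) →
    ∀ p : F.Walk r v, p.IsPath → TightList p.support

/-!
Let `p` be a path of `F'` starting at the minimum `r` of its component. It is a path of `F` all of
whose vertices are `≥ r`; let `q` be the `F`-path from the root `r₀` of the `F`-component of `r` to
`r`, and `a` its penultimate vertex. In the tight sequence `q`, every vertex `x` before `a` is
smaller than `r`, since otherwise `x a r` is a 231, 312 or 321. So `p` meets `q` at most in `r` and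
`a`. If `a ∉ p`, then `q` followed by `p` is a rooted path of `F`, of which `p` is a suffix. If
`a ∈ p`, then `p` starts with the edge `r a` because paths in a forest are unique; `q` up to `a`
followed by the rest of `p` is a rooted path, and `p` is tight because `r` is below all its
later vertices.
-/

open SimpleGraph Walk

section TightList

variable {α : Type*} [LinearOrder α]

theorem TightList.sublist {l₁ l₂ : List α} (h : l₁.Sublist l₂) (ht : TightList l₂) :
    TightList l₁ :=
  fun a b c hs => ht a b c (hs.trans h)

theorem TightList.cons_of_forall_lt {l : List α} {r : α} (ht : TightList l)
    (hr : ∀ x ∈ l, r < x) : TightList (r :: l) := by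
  intro a b c hs
  cases hs with
  | cons _ hs => exact ht a b c hs
  | cons_cons _ hs =>
    have hb := hr b (hs.subset (by simp))
    have hc := hr c (hs.subset (by simp))
    refine ⟨?_, ?_, ?_⟩ <;> intro h <;> order

theorem TightList.lt_of_mem_of_append_pair {l : List α} {a b x : α} (hn : (l ++ [a, b]).Nodup)
    (ht : TightList (l ++ [a, b])) (hx : x ∈ l) : x < b := by
  obtain ⟨h231, h312, h321⟩ :=
    ht x a b ((List.singleton_sublist.mpr hx).append (List.Sublist.refl [a, b]))
  have hxa : x ≠ a := (List.nodup_append.mp hn).2.2 x hx a (by simp)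
  have hxb : x ≠ b := (List.nodup_append.mp hn).2.2 x hx b (by simp)
  have hab : a ≠ b := by simpa using (List.nodup_append.mp hn).2.1
  by_contra! hbx
  replace hbx := lt_of_le_of_ne hbx hxb.symm
  rcases lt_or_gt_of_ne hxa with hxa | hxa
  · exact h231 ⟨hbx, hxa⟩
  rcases lt_or_gt_of_ne hab with hab | hab
  · exact h312 ⟨hab, hbx⟩
  · exact h321 ⟨hab, hxa⟩

end TightList

namespace SimpleGraph

variable {V : Type*} {G : SimpleGraph V}

theorem Walk.IsPath.append_of_disjoint {u v w : V} {p : G.Walk u v} {q : G.Walk v w}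
    (hp : p.IsPath) (hq : q.IsPath) (hpq : p.support.dropLast.Disjoint q.support) :
    (p.append q).IsPath := by
  rw [isPath_def, support_append_eq_support_dropLast_append, List.nodup_append']
  exact ⟨hp.support_nodup.sublist (List.dropLast_sublist _), hq.support_nodup, hpq⟩

variable [LinearOrder V]

theorem exists_reachable_forall_reachable_le [WellFoundedLT V] (G : SimpleGraph V) (v : V) :
    ∃ r, G.Reachable r v ∧ ∀ w, G.Reachable r w → r ≤ w := by
  obtain ⟨r, hr, hmin⟩ := wellFounded_lt.has_min {w | G.Reachable v w} ⟨v, .refl v⟩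
  exact ⟨r, hr.symm, fun w hw => not_lt.mp (hmin w (hr.trans hw))⟩

namespace IsTightForest

variable {r₀ : V}

theorem tightList_support_of_append (hG : IsTightForest G)
    (hroot : ∀ w, G.Reachable r₀ w → r₀ ≤ w) {u v : V} {q : G.Walk r₀ u} {p : G.Walk u v}
    (hqp : (q.append p).IsPath) : TightList p.support :=
  (hG.2 r₀ v hroot _ hqp).sublist (support_suffix_support_append q p).sublist

theorem lt_of_mem_dropLast_support (hG : IsTightForest G)
    (hroot : ∀ w, G.Reachable r₀ w → r₀ ≤ w) {a r x : V} {q : G.Walk r₀ a} (h : G.Adj a r)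
    (hq : (q.concat h).IsPath) (hx : x ∈ q.support.dropLast) : x < r := by
  have hsupp : (q.concat h).support = q.support.dropLast ++ [a, r] := by
    rw [support_concat, List.append_cons _ a, dropLast_support_concat]
  exact TightList.lt_of_mem_of_append_pair (hsupp ▸ hq.support_nodup)
    (hsupp ▸ hG.2 r₀ r hroot _ hq) hx

theorem tightList_support_of_forall_le [WellFoundedLT V] (hG : IsTightForest G)
    {r v : V} (p : G.Walk r v) (hp : p.IsPath) (hr : ∀ w ∈ p.support, r ≤ w) :
    TightList p.support := by
  obtain ⟨r₀, hr₀, hroot⟩ := G.exists_reachable_forall_reachable_le r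
  obtain ⟨q, hq⟩ := hr₀.exists_isPath
  by_cases hq₀ : q.Nil
  · obtain rfl := hq₀.eq
    exact hG.2 r₀ v hroot p hp
  obtain ⟨a, q', har, rfl⟩ : ∃ a, ∃ q' : G.Walk r₀ a, ∃ h : G.Adj a r, q = q'.concat h :=
    ⟨_, q.dropLast, adj_penultimate hq₀, (concat_dropLast _).symm⟩
  have hq'p : ∀ x ∈ q'.support.dropLast, x ∉ p.support := fun x hx hxp =>
    (hG.lt_of_mem_dropLast_support hroot har hq hx).not_ge (hr x hxp)
  by_cases ha : a ∈ p.support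
  · have hp₀ : ¬p.Nil := fun h => har.ne (by simpa [nil_iff_support_eq.mp h] using ha)
    obtain rfl : a = p.snd := hG.1.eq_snd_of_adj_start hp har.symm ha
    have hsupp : p.support = r :: p.tail.support := (cons_support_tail hp₀).symm
    have hrt : r ∉ p.tail.support := (List.nodup_cons.mp (hsupp ▸ hp.support_nodup)).1
    have htail : TightList p.tail.support := by
      refine hG.tightList_support_of_append hroot <|
        ((concat_isPath_iff har).mp hq).1.append_of_disjoint hp.tail fun x hx hxp => ?_
      exact hq'p x hx (hsupp ▸ List.mem_cons_of_mem _ hxp)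
    rw [hsupp]
    refine htail.cons_of_forall_lt fun x hx => lt_of_le_of_ne ?_ fun h => hrt (h ▸ hx)
    exact hr x (hsupp ▸ List.mem_cons_of_mem _ hx)
  · refine hG.tightList_support_of_append hroot <| hq.append_of_disjoint hp fun x hx hxp => ?_
    rw [support_concat, List.dropLast_concat, ← dropLast_support_concat q', List.mem_append,
      List.mem_singleton] at hx
    rcases hx with hx | rfl
    exacts [hq'p x hx hxp, ha hxp]

theorem anti [WellFoundedLT V] {G' : SimpleGraph V} (hle : G' ≤ G)
    (hG : IsTightForest G) : IsTightForest G' := by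
  refine ⟨hG.1.anti hle, fun r v hroot p hp => ?_⟩
  have h := hG.tightList_support_of_forall_le (p.mapLe hle) (hp.mapLe hle) fun w hw => by
    rw [support_mapLe_eq_support] at hw
    exact hroot w (p.takeUntil w hw).reachable
  rwa [support_mapLe_eq_support] at h

end IsTightForest

end SimpleGraph

theorem stmt_13_general (V : Finset ℕ)
    (F F' : SimpleGraph {x // x ∈ V}) (hsub : F' ≤ F) (hF : IsTightForest F) :
    IsTightForest F' :=
  hF.anti hsub

theorem stmt_13 (V : Finset ℕ) (hpos : ∀ v ∈ V, 0 < v)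
    (F F' : SimpleGraph {x // x ∈ V}) (hsub : F' ≤ F) (hF : IsTightForest F) :
    IsTightForest F' :=
  stmt_13_general V F F' hsub hF
end
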